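/- Let f : ℝ^d → ℝ, γ ∈ ℝ, c ∈ ℝ^d, and let ω_k ∈ ℝ^d satisfy f(ω_k) ≤ 0. Let g_k ∈ ℝ^d, define q_k(ω) = f(ω_k) + ⟨g_k, ω − ω_k⟩ + (γ/2)‖ω − ω_k‖², and assume f(ω) ≤ q_k(ω) for all ω ∈ ℝ^d. Assume further that if ω_k is not a local maximizer of ⟨c,·⟩ over F := {ω : f(ω) ≤ 0}, then there exists p ∈ ℝ^d with ⟨c,p⟩ > 0 and ⟨g_k,p⟩ < 0. Then ω_k is a local maximizer of ⟨c,·⟩ over F if and only if ω_k is a local maximizer of ⟨c,·⟩ over {ω : q_k(ω) ≤ 0}. -/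
import Mathlib


open scoped RealInnerProductSpace

/-- `x` is a local maximizer of the linear objective `⟨c,·⟩` over the set `S`. -/
def IsLocalMaximizer {d : ℕ} (c : EuclideanSpace ℝ (Fin d))
    (S : Set (EuclideanSpace ℝ (Fin d))) (x : EuclideanSpace ℝ (Fin d)) : Prop :=
  x ∈ S ∧ ∃ δ > 0, ∀ ω ∈ S, ‖ω - x‖ ≤ δ → ⟪c, ω⟫ ≤ ⟪c, x⟫

/-- **Local maximizers of the original and the model problem coincide.** A feasible point
`ω_k` is a local maximizer of `⟨c,·⟩` over `{f ≤ 0}` iff it is a local maximizer of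
`⟨c,·⟩` over `{q_k ≤ 0}`, where `q_k` is the quadratic support model of `f` at `ω_k`. -/
theorem stmt_4 {d : ℕ} (f : EuclideanSpace ℝ (Fin d) → ℝ) (γ : ℝ)
    (c : EuclideanSpace ℝ (Fin d)) (ωk : EuclideanSpace ℝ (Fin d))
    (hfeas : f ωk ≤ 0)
    (gk : EuclideanSpace ℝ (Fin d))
    (qk : EuclideanSpace ℝ (Fin d) → ℝ)
    (hqk : ∀ ω, qk ω = f ωk + ⟪gk, ω - ωk⟫ + γ / 2 * ‖ω - ωk‖ ^ 2)
    (hsupp : ∀ ω, f ω ≤ qk ω)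
    (hascent : ¬ IsLocalMaximizer c {ω | f ω ≤ 0} ωk →
      ∃ p : EuclideanSpace ℝ (Fin d), 0 < ⟪c, p⟫ ∧ ⟪gk, p⟫ < 0) :
    IsLocalMaximizer c {ω | f ω ≤ 0} ωk ↔ IsLocalMaximizer c {ω | qk ω ≤ 0} ωk := by
  have hqkωk : qk ωk ≤ 0 := by simp [hqk ωk, hfeas]
  constructor
  · rintro ⟨_, δ, hδ, hmax⟩
    exact ⟨hqkωk, δ, hδ, fun ω hω hn => hmax ω (le_trans (hsupp ω) hω) hn⟩
  · intro hq
    by_contra hnot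
    obtain ⟨p, hcp, hgp⟩ := hascent hnot
    obtain ⟨hmem, δ, hδ, hmax⟩ := hq
    have hp : p ≠ 0 := by rintro rfl; simp at hcp
    have hpn : 0 < ‖p‖ := norm_pos_iff.mpr hp
    set t := min (δ / ‖p‖) (-⟪gk, p⟫ / (|γ| / 2 * ‖p‖ ^ 2 + 1)) with ht
    have hden : 0 < |γ| / 2 * ‖p‖ ^ 2 + 1 := by positivity
    have ht0 : 0 < t := lt_min (div_pos hδ hpn) (div_pos (by linarith) hden)
    have ht1 : t ≤ δ / ‖p‖ := min_le_left _ _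
    have ht2 : t ≤ -⟪gk, p⟫ / (|γ| / 2 * ‖p‖ ^ 2 + 1) := min_le_right _ _
    have ht2' : t * (|γ| / 2 * ‖p‖ ^ 2 + 1) ≤ -⟪gk, p⟫ := by
      rw [← le_div_iff₀ hden] at *; linarith
    set ω := ωk + t • p with hω
    have hsub : ω - ωk = t • p := by simp [hω]
    have hnorm : ‖ω - ωk‖ = t * ‖p‖ := by
      rw [hsub, norm_smul, Real.norm_eq_abs, abs_of_pos ht0]
    have hqle : ω ∈ {ω | qk ω ≤ 0} := by
      show qk ω ≤ 0
      rw [hqk, hsub, real_inner_smul_right, norm_smul, Real.norm_eq_abs,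
        abs_of_pos ht0]
      have habs : γ ≤ |γ| := le_abs_self γ
      nlinarith [sq_nonneg (‖p‖), mul_pos ht0 ht0, sq_nonneg t]
    have hnd : ‖ω - ωk‖ ≤ δ := by
      rw [hnorm]
      calc t * ‖p‖ ≤ (δ / ‖p‖) * ‖p‖ := by nlinarith
        _ = δ := by field_simp
    have := hmax ω hqle hnd
    have hinner : ⟪c, ω⟫ = ⟪c, ωk⟫ + t * ⟪c, p⟫ := by
      rw [hω, inner_add_right, real_inner_smul_right]
    nlinarith [mul_pos ht0 hcp]
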